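/- For n ∈ ℕ₀, the first-order q-Genocchi polynomials satisfy 𝔊_{n,q}(x,y) = ∑_{k=0}^n [n choose k]_q (2/[k+1]_q) ( [k+1]_q q^{k(k-1)/2} y^k − 𝔊_{k+1,q}(0,y) ) 𝔅_{n-k,q}(x,0). -/

import Mathlib

open PowerSeries Finset

/-- The `q`-integer `[n]_q = 1 + q + ⋯ + q^(n-1)`. -/
noncomputable def qInt (q : ℂ) (n : ℕ) : ℂ := ∑ i ∈ Finset.range n, q ^ i

/-- The `q`-factorial `[n]_q!`. -/
noncomputable def qFact (q : ℂ) : ℕ → ℂ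
  | 0 => 1
  | n + 1 => qFact q n * qInt q (n + 1)

/-- The Gaussian (`q`-binomial) coefficient. -/
noncomputable def qBinom (q : ℂ) (n k : ℕ) : ℂ := qFact q n / (qFact q k * qFact q (n - k))

/-- The formal power series `e_q(tx) = ∑ x^n t^n/[n]_q!`. -/
noncomputable def qExpSeries (q : ℂ) (x : ℂ) : PowerSeries ℂ :=
  PowerSeries.mk fun n => x ^ n / qFact q n

/-- The formal power series `E_q(ty) = ∑ q^(n(n-1)/2) y^n t^n/[n]_q!`. -/
noncomputable def qExpSeries' (q : ℂ) (y : ℂ) : PowerSeries ℂ :=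
  PowerSeries.mk fun n => q ^ (n * (n - 1) / 2) * y ^ n / qFact q n

/-- Generating series `(2t/(e_q(t)+1))^α e_q(tx) E_q(ty)` of the `q`-Genocchi polynomials. -/
noncomputable def qGenocchiSeries (q : ℂ) (α : ℕ) (x y : ℂ) : PowerSeries ℂ :=
  (PowerSeries.C (2 : ℂ) * PowerSeries.X * (qExpSeries q 1 + 1)⁻¹) ^ α *
    qExpSeries q x * qExpSeries' q y

/-- The `q`-Genocchi polynomial `𝔊_{n,q}^{(α)}(x,y)`. -/
noncomputable def qGenocchi (q : ℂ) (α : ℕ) (x y : ℂ) (n : ℕ) : ℂ :=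
  qFact q n * PowerSeries.coeff n (qGenocchiSeries q α x y)

/-- The `q`-Bernoulli polynomial `𝔅_{n,q}(x,y)`, defined via
`(t/(e_q(t)-1)) e_q(tx) E_q(ty) = ∑ 𝔅_{n,q}(x,y) t^n/[n]_q!`
(note `t/(e_q(t)-1)` is the inverse of the series `∑ t^n/[n+1]_q!`). -/
noncomputable def qBernoulli (q : ℂ) (x y : ℂ) (n : ℕ) : ℂ :=
  qFact q n * PowerSeries.coeff n
    ((PowerSeries.mk fun k => (qFact q (k + 1))⁻¹)⁻¹ * qExpSeries q x * qExpSeries' q y)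

/-- The Gauss polynomial `(x+y)_q^n = ∑_k [n k]_q q^(k(k-1)/2) x^(n-k) y^k`. -/
noncomputable def qAddPow (q : ℂ) (x y : ℂ) (n : ℕ) : ℂ :=
  ∑ k ∈ Finset.range (n + 1), qBinom q n k * q ^ (k * (k - 1) / 2) * x ^ (n - k) * y ^ k

/-
The identity `2t/(e+1) · (e-1) = 2t - 2 · 2t/(e+1)` (with `e = e_q(t)`) rewrites the Genocchi
generating function as `t/(e_q(t)-1) · e_q(tx) · 2(E_q(ty) - G(0,y)/t)`, where `G(0,y)` is the
Genocchi generating function at `x = 0`.  Reading off the coefficient of `tⁿ` in this product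
of the Bernoulli series at `(x,0)` and `2(E_q(ty) - G(0,y)/t)` gives the convolution.
-/

theorem PowerSeries.sub_one_mul_two_X_mul_inv_add_one {K : Type*} [Field K] (e : K⟦X⟧)
    (he : constantCoeff (e + 1) ≠ 0) :
    (e - 1) * (2 * X * (e + 1)⁻¹) = 2 * X - 2 * (2 * X * (e + 1)⁻¹) := by
  linear_combination 2 * X * PowerSeries.mul_inv_cancel _ he

section

variable (q : ℂ)

theorem qFact_ne_zero (hq : ∀ n : ℕ, qInt q (n + 1) ≠ 0) (n : ℕ) : qFact q n ≠ 0 := by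
  induction n with
  | zero => exact one_ne_zero
  | succ m ih => exact mul_ne_zero ih (hq m)

theorem constantCoeff_qExpSeries (x : ℂ) : constantCoeff (qExpSeries q x) = 1 := by
  simp [qExpSeries, qFact]

theorem qExpSeries_zero : qExpSeries q 0 = 1 := by
  ext (_ | n) <;> simp [qExpSeries, qFact, coeff_one]

theorem qExpSeries'_zero : qExpSeries' q 0 = 1 := by
  ext (_ | n) <;> simp [qExpSeries', qFact, coeff_one]

noncomputable def qExpSubOneDivX : PowerSeries ℂ :=
  mk fun k => (qFact q (k + 1))⁻¹

theorem constantCoeff_qExpSubOneDivX : constantCoeff (qExpSubOneDivX q) = 1 := by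
  simp [qExpSubOneDivX, qFact, qInt]

theorem X_mul_qExpSubOneDivX : X * qExpSubOneDivX q = qExpSeries q 1 - 1 := by
  ext (_ | k) <;> simp [qExpSubOneDivX, qExpSeries, coeff_succ_X_mul, coeff_one, qFact]

theorem qBernoulli_zero_right (x : ℂ) (m : ℕ) :
    qBernoulli q x 0 m = qFact q m * coeff m ((qExpSubOneDivX q)⁻¹ * qExpSeries q x) := by
  rw [qBernoulli, qExpSeries'_zero, mul_one, qExpSubOneDivX]

noncomputable def qGenocchiZeroDivX (y : ℂ) : PowerSeries ℂ :=
  mk fun k => coeff (k + 1) (qGenocchiSeries q 1 0 y)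

theorem qGenocchiSeries_one_zero (y : ℂ) :
    qGenocchiSeries q 1 0 y = 2 * X * (qExpSeries q 1 + 1)⁻¹ * qExpSeries' q y := by
  rw [qGenocchiSeries, pow_one, qExpSeries_zero, mul_one, map_ofNat]

theorem X_mul_qGenocchiZeroDivX (y : ℂ) :
    X * qGenocchiZeroDivX q y = qGenocchiSeries q 1 0 y := by
  have hconst : constantCoeff (qGenocchiSeries q 1 0 y) = 0 := by
    simp [qGenocchiSeries_one_zero]
  conv_rhs => rw [eq_X_mul_shift_add_const (qGenocchiSeries q 1 0 y), hconst, map_zero, add_zero]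
  rfl

theorem qGenocchiSeries_one_eq (x y : ℂ) :
    qGenocchiSeries q 1 x y =
      2 * (qExpSeries' q y - qGenocchiZeroDivX q y) * ((qExpSubOneDivX q)⁻¹ * qExpSeries q x) := by
  have hM : (qExpSubOneDivX q)⁻¹ * qExpSubOneDivX q = 1 :=
    PowerSeries.inv_mul_cancel _ (by simp [constantCoeff_qExpSubOneDivX])
  have he : constantCoeff (qExpSeries q 1 + 1) ≠ 0 := by
    norm_num [constantCoeff_qExpSeries]
  have hG : qGenocchiSeries q 1 x y =
      2 * X * (qExpSeries q 1 + 1)⁻¹ * qExpSeries q x * qExpSeries' q y := by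
    rw [qGenocchiSeries, pow_one, map_ofNat]
  have hS := X_mul_qGenocchiZeroDivX q y
  rw [qGenocchiSeries_one_zero] at hS
  calc qGenocchiSeries q 1 x y
      = (qExpSubOneDivX q)⁻¹ * (qExpSubOneDivX q * qGenocchiSeries q 1 x y) := by
        rw [← mul_assoc, hM, one_mul]
    _ = (qExpSubOneDivX q)⁻¹ *
          (qExpSeries q x * (2 * (qExpSeries' q y - qGenocchiZeroDivX q y))) := by
        congr 1
        apply X_mul_cancel
        rw [hG]
        linear_combination (2 * X * (qExpSeries q 1 + 1)⁻¹ * qExpSeries q x * qExpSeries' q y) *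
          X_mul_qExpSubOneDivX q + 2 * qExpSeries q x * hS +
          qExpSeries q x * qExpSeries' q y * sub_one_mul_two_X_mul_inv_add_one _ he
    _ = _ := by ring

theorem coeff_two_mul_qExpSeries'_sub_qGenocchiZeroDivX (hq : ∀ n : ℕ, qInt q (n + 1) ≠ 0)
    (y : ℂ) (k : ℕ) :
    coeff k (2 * (qExpSeries' q y - qGenocchiZeroDivX q y)) =
      2 / qInt q (k + 1) *
        (qInt q (k + 1) * q ^ (k * (k - 1) / 2) * y ^ k - qGenocchi q 1 0 y (k + 1)) /
          qFact q k := by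
  have hk := qFact_ne_zero q hq k
  have hI := hq k
  rw [← map_ofNat C, coeff_C_mul, map_sub, qExpSeries', qGenocchiZeroDivX, coeff_mk, coeff_mk,
    qGenocchi, qFact]
  field_simp

end

/-- Relation between first-order `q`-Genocchi and `q`-Bernoulli polynomials. -/
theorem qGenocchi_qBernoulli_relation (q : ℂ) (hq : ∀ n : ℕ, qInt q (n + 1) ≠ 0)
    (n : ℕ) (x y : ℂ) :
    qGenocchi q 1 x y n =
      ∑ k ∈ Finset.range (n + 1),
        qBinom q n k * (2 / qInt q (k + 1)) *
          (qInt q (k + 1) * q ^ (k * (k - 1) / 2) * y ^ k - qGenocchi q 1 0 y (k + 1)) *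
          qBernoulli q x 0 (n - k) := by
  rw [qGenocchi, qGenocchiSeries_one_eq, coeff_mul, Nat.sum_antidiagonal_eq_sum_range_succ_mk,
    mul_sum]
  refine sum_congr rfl fun k _ => ?_
  rw [coeff_two_mul_qExpSeries'_sub_qGenocchiZeroDivX q hq, qBernoulli_zero_right, qBinom]
  have hk := qFact_ne_zero q hq k
  have hnk := qFact_ne_zero q hq (n - k)
  field_simp
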